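/- arXiv:1709.01577 — 3 statements merged into one kernel-verified Lean document; each statement's English description precedes it below -/
import Mathlib

section
/- Under consistency, network ignorability and positivity, the mean potential outcome of every unit is identified by the network g-formula: for every unit i ∈ {1,…,N} and every treatment allocation a ∈ {0,1}^N, E[Y_i(a)] = ∑_{l ∈ 𝓛 : P(L=l)>0} E[Y_i | A = a, L = l] · P(L = l). -/
open MeasureTheory Filter Finset

/-- Conditional expectation of `f` given the event `s`: `E[f | s] = (∫_s f dP) / P(s)`. -/
noncomputable def condMean {Ω : Type*} [MeasurableSpace Ω] (P : Measure Ω)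
    (f : Ω → ℝ) (s : Set Ω) : ℝ :=
  (∫ ω in s, f ω ∂P) / (P s).toReal

open scoped Classical in
/-- Under network consistency, network ignorability and positivity, the mean potential
outcome of every unit is identified by the network g-formula
`E[Y_i(a)] = ∑_{l : P(L=l) > 0} E[Y_i | A = a, L = l] ⬝ P(L = l)`. -/
theorem network_g_formula
    {Ω : Type*} [MeasurableSpace Ω] (P : Measure Ω) [IsProbabilityMeasure P]
    {N : ℕ} (hN : 1 ≤ N)
    {𝓛 : Type*} [Fintype 𝓛] [MeasurableSpace 𝓛] [MeasurableSingletonClass 𝓛]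
    -- treatment allocation
    (A : Ω → Fin N → Bool) (hA : Measurable A)
    -- covariates
    (L : Ω → 𝓛) (hL : Measurable L)
    -- potential outcomes Y_i(a)
    (Ypot : (Fin N → Bool) → Fin N → Ω → ℝ)
    (hYmeas : ∀ a i, Measurable (Ypot a i))
    (hYint : ∀ a i, Integrable (Ypot a i) P)
    -- observed outcomes
    (Yobs : Fin N → Ω → ℝ)
    -- (i) consistency: Y_i = Y_i(A) a.s.
    (hcons : ∀ i, ∀ᵐ ω ∂P, Yobs i ω = Ypot (A ω) i ω)
    -- (ii) network ignorability: (Y_1(a),…,Y_N(a)) ⫫ A | L, for every a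
    (hign : ∀ (a a' : Fin N → Bool) (B : Set (Fin N → ℝ)), MeasurableSet B →
      ∀ l : 𝓛,
        P ({ω | (fun i => Ypot a i ω) ∈ B} ∩ {ω | A ω = a'} ∩ {ω | L ω = l})
            * P {ω | L ω = l}
          = P ({ω | (fun i => Ypot a i ω) ∈ B} ∩ {ω | L ω = l})
            * P ({ω | A ω = a'} ∩ {ω | L ω = l}))
    -- (iii) positivity: P(A = a | L = l) ≥ σ > 0 whenever P(L = l) > 0
    (hpos : ∃ σ : ℝ, 0 < σ ∧ ∀ (a : Fin N → Bool) (l : 𝓛), 0 < P {ω | L ω = l} →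
      σ ≤ (P ({ω | A ω = a} ∩ {ω | L ω = l})).toReal / (P {ω | L ω = l}).toReal) :
    ∀ (i : Fin N) (a : Fin N → Bool),
      ∫ ω, Ypot a i ω ∂P
        = ∑ l ∈ Finset.univ.filter (fun l : 𝓛 => 0 < P {ω | L ω = l}),
            condMean P (Yobs i) ({ω | A ω = a} ∩ {ω | L ω = l})
              * (P {ω | L ω = l}).toReal := by
  intro i a
  obtain ⟨σ, hσ, hposσ⟩ := hpos
  have hmL : ∀ l : 𝓛, MeasurableSet {ω | L ω = l} := fun l =>
    hL (MeasurableSet.singleton l)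
  have hmA : MeasurableSet {ω | A ω = a} := hA (MeasurableSet.singleton a)
  -- Step 1: partition over values of L
  have hpart : ∫ ω, Ypot a i ω ∂P
      = ∑ l ∈ (Finset.univ : Finset 𝓛), ∫ ω in {ω | L ω = l}, Ypot a i ω ∂P := by
    rw [← MeasureTheory.integral_biUnion_finset]
    · rw [show (⋃ l ∈ (Finset.univ : Finset 𝓛), {ω | L ω = l}) = Set.univ by
        ext ω; simp]
      simp [setIntegral_univ]
    · exact fun l _ => hmL l
    · intro x _ y _ hxy
      simp only [Set.disjoint_left]
      rintro ω h1 h2; exact hxy (h1.symm.trans h2)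
    · exact fun l _ => (hYint a i).integrableOn
  rw [hpart]
  -- drop the null fibers
  rw [← Finset.sum_subset (Finset.filter_subset _ _)
    (by
      intro l _ hl
      have h0 : P {ω | L ω = l} = 0 := by
        by_contra h0
        exact hl (Finset.mem_filter.mpr
          ⟨Finset.mem_univ l, zero_le.lt_of_ne (Ne.symm h0)⟩)
      rw [Measure.restrict_eq_zero.mpr h0, integral_zero_measure])]
  apply Finset.sum_congr rfl
  intro l hlmem
  simp only [Finset.mem_filter, Finset.mem_univ, true_and] at hlmem
  have hl : 0 < P {ω | L ω = l} := hlmem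
  -- Step 2: independence extended to integrals
  set X : Ω → (Fin N → ℝ) := fun ω j => Ypot a j ω with hXdef
  have hX : Measurable X := measurable_pi_lambda _ (fun j => hYmeas a j)
  set sA : Set Ω := {ω | A ω = a}
  set sL : Set Ω := {ω | L ω = l}
  have hmeq : (P sL) • ((P.restrict (sA ∩ sL)).map X)
      = (P (sA ∩ sL)) • ((P.restrict sL).map X) := by
    ext B hB
    simp only [Measure.smul_apply, smul_eq_mul,
      Measure.map_apply hX hB, Measure.restrict_apply (hX hB)]
    calc P sL * P (X ⁻¹' B ∩ (sA ∩ sL))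
        = P ({ω | X ω ∈ B} ∩ sA ∩ sL) * P sL := by
          rw [mul_comm, Set.inter_assoc]; rfl
      _ = P ({ω | X ω ∈ B} ∩ sL) * P (sA ∩ sL) := hign a a B hB l
      _ = P (sA ∩ sL) * P (X ⁻¹' B ∩ sL) := by rw [mul_comm]; rfl
  have key : (P sL).toReal * ∫ ω in sA ∩ sL, Ypot a i ω ∂P
      = (P (sA ∩ sL)).toReal * ∫ ω in sL, Ypot a i ω ∂P := by
    have h2 := congrArg (fun μ : Measure (Fin N → ℝ) => ∫ x, x i ∂μ) hmeq
    simp only [integral_smul_measure, smul_eq_mul] at h2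
    rw [integral_map hX.aemeasurable (measurable_pi_apply i).aestronglyMeasurable,
        integral_map hX.aemeasurable (measurable_pi_apply i).aestronglyMeasurable] at h2
    exact h2
  -- Step 3: consistency on the event {A = a}
  have hswap : ∫ ω in sA ∩ sL, Yobs i ω ∂P = ∫ ω in sA ∩ sL, Ypot a i ω ∂P := by
    apply setIntegral_congr_ae (hmA.inter (hmL l))
    filter_upwards [hcons i] with ω h hmem
    rw [h, hmem.1]
  -- Step 4: positivity and algebra
  have hc2 : 0 < (P sL).toReal :=
    ENNReal.toReal_pos hl.ne' (measure_ne_top P _)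
  have hc1 : 0 < (P (sA ∩ sL)).toReal := by
    have hratio := hposσ a l hl
    have : 0 < (P (sA ∩ sL)).toReal / (P sL).toReal := lt_of_lt_of_le hσ hratio
    by_contra h
    push_neg at h
    have : (P (sA ∩ sL)).toReal / (P sL).toReal ≤ 0 :=
      div_nonpos_of_nonpos_of_nonneg h hc2.le
    linarith
  rw [condMean, hswap]
  field_simp
  linarith [key]
end

section
/- If the observed unit triples (Y_i, A_i, L_i), i = 1,…,N, are mutually independent, then the network g-formula reduces to the standard g-formula: for every unit i and every a = (a_1,…,a_N) ∈ {0,1}^N, ∑_{l ∈ 𝓛₀^N} E[Y_i | A = a, L = l] · P(L = l) = ∑_{l_i ∈ 𝓛₀} E[Y_i | A_i = a_i, L_i = l_i] · P(L_i = l_i). -/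
open MeasureTheory Filter Finset

lemma sum_toReal_meas_fiber {Ω : Type*} [MeasurableSpace Ω] (P : Measure Ω)
    [IsProbabilityMeasure P]
    {𝓛₀ : Type*} [Fintype 𝓛₀] [MeasurableSpace 𝓛₀] [MeasurableSingletonClass 𝓛₀]
    (f : Ω → 𝓛₀) (hf : Measurable f) :
    ∑ x : 𝓛₀, (P {ω | f ω = x}).toReal = 1 := by
  have hm : ∀ x : 𝓛₀, MeasurableSet {ω | f ω = x} := fun x => hf (measurableSet_singleton x)
  have hdis : Pairwise (Function.onFun Disjoint fun x : 𝓛₀ => {ω | f ω = x}) := by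
    intro x y hxy
    exact Set.disjoint_left.2 fun ω h1 h2 => hxy ((h1 : f ω = x).symm.trans h2)
  have hU : (⋃ x : 𝓛₀, {ω | f ω = x}) = Set.univ := by
    ext ω; simp
  have h1 : ∑ x : 𝓛₀, P {ω | f ω = x} = 1 := by
    rw [← tsum_fintype (L := SummationFilter.unconditional _), ← measure_iUnion hdis hm, hU, measure_univ]
  rw [← ENNReal.toReal_sum (fun x _ => measure_ne_top P _), h1, ENNReal.toReal_one]

/-- If the observed unit triples `(Y_i, A_i, L_i)`, `i = 1,…,N`, are mutually independent,
then the network g-formula reduces to the standard g-formula: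
`∑_{l ∈ 𝓛₀^N} E[Y_i | A = a, L = l] P(L = l) = ∑_{l_i ∈ 𝓛₀} E[Y_i | A_i = a_i, L_i = l_i] P(L_i = l_i)`. -/
theorem network_g_formula_reduces_to_standard
    {Ω : Type*} [MeasurableSpace Ω] (P : Measure Ω) [IsProbabilityMeasure P]
    {N : ℕ} (hN : 1 ≤ N)
    {𝓛₀ : Type*} [Fintype 𝓛₀] [MeasurableSpace 𝓛₀] [MeasurableSingletonClass 𝓛₀]
    (Y : Fin N → Ω → ℝ) (A : Fin N → Ω → Bool) (L : Fin N → Ω → 𝓛₀)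
    (hY : ∀ i, Measurable (Y i)) (hA : ∀ i, Measurable (A i)) (hL : ∀ i, Measurable (L i))
    (hint : ∀ i, Integrable (Y i) P)
    -- mutual independence of the triples (Y_i, A_i, L_i)
    (hindep : ProbabilityTheory.iIndepFun (m := fun _ : Fin N => inferInstance)
      (fun i ω => (Y i ω, A i ω, L i ω)) P)
    -- positivity, so that all conditional expectations are well defined
    (hpos : ∀ (i : Fin N) (a : Bool) (l : 𝓛₀), 0 < P {ω | A i ω = a ∧ L i ω = l}) :
    ∀ (i : Fin N) (a : Fin N → Bool),
      ∑ l : Fin N → 𝓛₀,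
          condMean P (Y i) {ω | (∀ j, A j ω = a j) ∧ (∀ j, L j ω = l j)}
            * (P {ω | ∀ j, L j ω = l j}).toReal
        = ∑ li : 𝓛₀,
            condMean P (Y i) {ω | A i ω = a i ∧ L i ω = li}
              * (P {ω | L i ω = li}).toReal := by
  intro i a
  classical
  set X : Fin N → Ω → ℝ × Bool × 𝓛₀ := fun j ω => (Y j ω, A j ω, L j ω) with hXdef
  have hXm : ∀ j, Measurable (X j) := fun j => (hY j).prodMk ((hA j).prodMk (hL j))
  have hmul := hindep.measure_inter_preimage_eq_mul
  -- measurability of the basic rectangle sets in ℝ × Bool × 𝓛₀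
  have hBm : ∀ (b : Bool) (x : 𝓛₀),
      MeasurableSet {p : ℝ × Bool × 𝓛₀ | p.2.1 = b ∧ p.2.2 = x} := by
    intro b x
    have h1 : MeasurableSet {p : ℝ × Bool × 𝓛₀ | p.2.1 = b} :=
      measurable_snd.fst (measurableSet_singleton b)
    have h2 : MeasurableSet {p : ℝ × Bool × 𝓛₀ | p.2.2 = x} :=
      measurable_snd.snd (measurableSet_singleton x)
    exact h1.inter h2
  have hCm : ∀ (x : 𝓛₀), MeasurableSet {p : ℝ × Bool × 𝓛₀ | p.2.2 = x} :=
    fun x => measurable_snd.snd (measurableSet_singleton x)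
  -- factorization of P(L = l)
  have keyL : ∀ (l : Fin N → 𝓛₀),
      (P {ω | ∀ j, L j ω = l j}).toReal = ∏ j, (P {ω | L j ω = l j}).toReal := by
    intro l
    have hset : {ω | ∀ j, L j ω = l j} = ⋂ j ∈ (univ : Finset (Fin N)),
        X j ⁻¹' {p : ℝ × Bool × 𝓛₀ | p.2.2 = l j} := by
      ext ω; simp [X]
    have := hmul univ (sets := fun j => {p : ℝ × Bool × 𝓛₀ | p.2.2 = l j})
      (fun j _ => hCm (l j))
    rw [hset, this, ENNReal.toReal_prod]
    rfl
  -- the per-l reduction of the conditional mean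
  have key : ∀ (l : Fin N → 𝓛₀),
      condMean P (Y i) {ω | (∀ j, A j ω = a j) ∧ (∀ j, L j ω = l j)} =
      condMean P (Y i) {ω | A i ω = a i ∧ L i ω = l i} := by
    intro l
    set E : Fin N → Set Ω := fun j =>
      X j ⁻¹' {p : ℝ × Bool × 𝓛₀ | p.2.1 = a j ∧ p.2.2 = l j} with hEdef
    have hEeq : ∀ j, E j = {ω | A j ω = a j ∧ L j ω = l j} := fun j => rfl
    have hEm : ∀ j, MeasurableSet (E j) := fun j => hXm j (hBm (a j) (l j))
    set T : Finset (Fin N) := univ.erase i with hTdef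
    set F : Set Ω := ⋂ j ∈ T, E j with hFdef
    have hFm : MeasurableSet F :=
      MeasurableSet.biInter (Set.to_countable _) fun j _ => hEm j
    have hPF : P F = ∏ j ∈ T, P (E j) :=
      hmul T (sets := fun j => {p : ℝ × Bool × 𝓛₀ | p.2.1 = a j ∧ p.2.2 = l j})
        (fun j _ => hBm (a j) (l j))
    have hPFne : P F ≠ 0 := by
      rw [hPF]
      exact Finset.prod_ne_zero_iff.2 fun j _ => (hpos j (a j) (l j)).ne'
    have hPFtop : P F ≠ ⊤ := measure_ne_top P F
    have hPFtoReal : (P F).toReal ≠ 0 := ENNReal.toReal_ne_zero.2 ⟨hPFne, hPFtop⟩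
    -- joint event
    have hJ : {ω | (∀ j, A j ω = a j) ∧ (∀ j, L j ω = l j)} = E i ∩ F := by
      ext ω
      simp only [Set.mem_setOf_eq, Set.mem_inter_iff, hEeq, hFdef, Set.mem_iInter,
        Finset.mem_erase, Finset.mem_univ, and_true, T]
      constructor
      · rintro ⟨h1, h2⟩
        exact ⟨⟨h1 i, h2 i⟩, fun j _ => ⟨h1 j, h2 j⟩⟩
      · rintro ⟨hi, hrest⟩
        constructor
        · intro j
          by_cases hji : j = i
          · subst hji; exact hi.1
          · exact (hrest j hji).1
        · intro j
          by_cases hji : j = i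
          · subst hji; exact hi.2
          · exact (hrest j hji).2
    -- measure of the joint event factorizes
    have hPJ : P (E i ∩ F) = P (E i) * P F := by
      have huniv : {ω | (∀ j, A j ω = a j) ∧ (∀ j, L j ω = l j)} =
          ⋂ j ∈ (univ : Finset (Fin N)), E j := by
        ext ω
        simp only [Set.mem_iInter, Finset.mem_univ, hEeq, Set.mem_setOf_eq, forall_const]
        exact ⟨fun h j => ⟨h.1 j, h.2 j⟩, fun h => ⟨fun j => (h j).1, fun j => (h j).2⟩⟩
      have h1 := hmul univ
        (sets := fun j => {p : ℝ × Bool × 𝓛₀ | p.2.1 = a j ∧ p.2.2 = l j})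
        (fun j _ => hBm (a j) (l j))
      have h2 : (∏ j, P (E j)) = P (E i) * ∏ j ∈ T, P (E j) :=
        (Finset.mul_prod_erase univ (fun j => P (E j)) (mem_univ i)).symm
      rw [← hJ, huniv] at *
      rw [h1, h2, hPF]
    -- independence of the i-th block and the rest
    have hdisT : Disjoint ({i} : Finset (Fin N)) T := by
      simp [hTdef]
    have hIF := hindep.indepFun_finset {i} T hdisT hXm
    -- compose with measurable maps to get independence of the two indicators
    have hiMem : i ∈ ({i} : Finset (Fin N)) := mem_singleton_self i
    set Bi : Set (ℝ × Bool × 𝓛₀) := {p | p.2.1 = a i ∧ p.2.2 = l i} with hBidef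
    set BT : Set (↥T → ℝ × Bool × 𝓛₀) :=
      {v | ∀ j : ↥T, ((v j).2.1 = a (j : Fin N) ∧ (v j).2.2 = l (j : Fin N))} with hBTdef
    have hBTm : MeasurableSet BT := by
      have : BT = ⋂ j : ↥T, (fun v : ↥T → ℝ × Bool × 𝓛₀ => v j) ⁻¹'
          {p : ℝ × Bool × 𝓛₀ | p.2.1 = a (j : Fin N) ∧ p.2.2 = l (j : Fin N)} := by
        ext v; simp [hBTdef]
      rw [this]
      exact MeasurableSet.iInter fun j => (measurable_pi_apply j) (hBm _ _)
    set φ : (↥({i} : Finset (Fin N)) → ℝ × Bool × 𝓛₀) → ℝ := fun v =>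
      Set.indicator Bi (fun p => p.1) (v ⟨i, hiMem⟩) with hφdef
    set ψ : (↥T → ℝ × Bool × 𝓛₀) → ℝ := Set.indicator BT (fun _ => (1 : ℝ)) with hψdef
    have hφm : Measurable φ :=
      (measurable_fst.indicator (hBm (a i) (l i))).comp (measurable_pi_apply _)
    have hψm : Measurable ψ := measurable_const.indicator hBTm
    have hind2 : ProbabilityTheory.IndepFun
        (fun ω => φ (fun j : ↥({i} : Finset (Fin N)) => X j ω))
        (fun ω => ψ (fun j : ↥T => X j ω)) P :=
      hIF.comp hφm hψm
    have hleft : (fun ω => φ (fun j : ↥({i} : Finset (Fin N)) => X j ω)) =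
        (E i).indicator (Y i) := by
      funext ω
      simp only [hφdef, Set.indicator_apply]
      by_cases h : ω ∈ E i
      · rw [if_pos h, if_pos (show X i ω ∈ Bi from h)]
      · rw [if_neg h, if_neg (show X i ω ∉ Bi from h)]
    have hright : (fun ω => ψ (fun j : ↥T => X j ω)) =
        F.indicator (fun _ => (1 : ℝ)) := by
      funext ω
      simp only [hψdef, Set.indicator_apply]
      congr 1
      simp only [eq_iff_iff, hBTdef, Set.mem_setOf_eq, hFdef, Set.mem_iInter, hEeq]
      constructor
      · intro h j hj
        exact h ⟨j, hj⟩
      · intro h j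
        exact h (j : Fin N) j.2
    rw [hleft, hright] at hind2
    have hint1 : Integrable ((E i).indicator (Y i)) P := (hint i).indicator (hEm i)
    have hint2 : Integrable (F.indicator (fun _ => (1 : ℝ))) P :=
      (integrable_const (1 : ℝ)).indicator hFm
    have hmulInt := ProbabilityTheory.IndepFun.integral_mul_eq_mul_integral hind2 hint1.1 hint2.1
    have hprodind : ((E i).indicator (Y i)) * (F.indicator (fun _ => (1 : ℝ))) =
        (E i ∩ F).indicator (Y i) := by
      funext ω
      by_cases h1 : ω ∈ E i <;> by_cases h2 : ω ∈ F <;>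
        simp [Set.indicator_apply, h1, h2]
    rw [hprodind] at hmulInt
    have hIid : ∫ ω, (E i ∩ F).indicator (Y i) ω ∂P = ∫ ω in E i ∩ F, Y i ω ∂P :=
      integral_indicator ((hEm i).inter hFm)
    have hIil : ∫ ω, (E i).indicator (Y i) ω ∂P = ∫ ω in E i, Y i ω ∂P :=
      integral_indicator (hEm i)
    have hIir : ∫ ω, F.indicator (fun _ => (1 : ℝ)) ω ∂P = (P F).toReal := by
      rw [integral_indicator hFm, setIntegral_const, smul_eq_mul, mul_one, Measure.real]
    rw [hIid, hIil, hIir] at hmulInt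
    -- put it together
    rw [hJ]
    unfold condMean
    rw [hmulInt, hPJ, ENNReal.toReal_mul, mul_div_mul_right _ _ hPFtoReal]
    rfl
  -- rewrite the left sum and factor
  calc ∑ l : Fin N → 𝓛₀,
        condMean P (Y i) {ω | (∀ j, A j ω = a j) ∧ (∀ j, L j ω = l j)}
          * (P {ω | ∀ j, L j ω = l j}).toReal
      = ∑ l : Fin N → 𝓛₀, ∏ j, (if j = i then
          (fun x => condMean P (Y i) {ω | A i ω = a i ∧ L i ω = x}
            * (P {ω | L i ω = x}).toReal) else
          (fun x => (P {ω | L j ω = x}).toReal)) (l j) := by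
        apply Finset.sum_congr rfl
        intro l _
        rw [key l, keyL l]
        rw [← Finset.mul_prod_erase univ (fun j => (P {ω | L j ω = l j}).toReal) (mem_univ i),
            ← mul_assoc,
            ← Finset.mul_prod_erase univ _ (mem_univ i)]
        simp only [if_pos rfl]
        congr 1
        apply Finset.prod_congr rfl
        intro j hj
        rw [if_neg (Finset.mem_erase.1 hj).1]
    _ = ∏ j, ∑ x : 𝓛₀, (if j = i then
          (fun x => condMean P (Y i) {ω | A i ω = a i ∧ L i ω = x}
            * (P {ω | L i ω = x}).toReal) else
          (fun x => (P {ω | L j ω = x}).toReal)) x := by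
        rw [← Fintype.piFinset_univ]
        exact Finset.sum_prod_piFinset univ _
    _ = ∑ li : 𝓛₀, condMean P (Y i) {ω | A i ω = a i ∧ L i ω = li}
          * (P {ω | L i ω = li}).toReal := by
        rw [Finset.prod_eq_single i]
        · simp
        · intro j _ hj
          simp only [if_neg hj]
          exact sum_toReal_meas_fiber P (L j) (hL j)
        · intro h; exact absurd (mem_univ i) h
end

section
/- For every independent set S ⊆ V of the graph G (no two elements of S are adjacent in G), the random variables (X_i)_{i∈S} are mutually conditionally independent given (X_j)_{j∈V∖S}; equivalently, for every configuration x with p-positive marginal, p(X_S = x_S | X_{V∖S} = x_{V∖S}) = ∏_{i∈S} p(X_i = x_i | X_{V∖{i}} = x_{V∖{i}}). -/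
open Finset

open scoped Classical in
/-- Sum–product exchange: summing a product of per-coordinate functions over all
configurations that agree with `x` off `s` factors as a product of sums. -/
theorem aux_sum_filter_eq_prod_sum {V : Type*} [Fintype V] [DecidableEq V]
    (S : V → Type*) [∀ i, Fintype (S i)] [∀ i, DecidableEq (S i)]
    (x : ∀ j, S j) (s : Finset V) (g : (i : V) → S i → ℝ) :
    ∑ x' ∈ Finset.univ.filter (fun x' : ∀ j, S j => ∀ j ∉ s, x' j = x j),
        ∏ i ∈ s, g i (x' i)
      = ∏ i ∈ s, ∑ y : S i, g i y := by
  classical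
  induction s using Finset.induction with
  | empty =>
      have h1 : Finset.univ.filter
          (fun x' : ∀ j, S j => ∀ j ∉ (∅ : Finset V), x' j = x j) = {x} := by
        ext x'
        simp [funext_iff]
      rw [h1]
      simp
  | @insert a s ha ih =>
      have key : ∑ x' ∈ Finset.univ.filter
            (fun x' : ∀ j, S j => ∀ j ∉ insert a s, x' j = x j),
            ∏ i ∈ insert a s, g i (x' i)
          = ∑ q ∈ (Finset.univ : Finset (S a)) ×ˢ
              (Finset.univ.filter (fun x' : ∀ j, S j => ∀ j ∉ s, x' j = x j)),
              ∏ i ∈ insert a s, g i ((Function.update q.2 a q.1) i) := by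
        refine Finset.sum_nbij' (fun x' => (x' a, Function.update x' a (x a)))
          (fun q => Function.update q.2 a q.1) ?_ ?_ ?_ ?_ ?_
        · intro x' hx'
          simp only [mem_filter, mem_univ, true_and] at hx'
          refine Finset.mem_product.mpr ⟨mem_univ _, ?_⟩
          simp only [mem_filter, mem_univ, true_and]
          intro j hj
          by_cases hja : j = a
          · subst hja; simp
          · rw [Function.update_of_ne hja]
            exact hx' j (by simp [hja, hj])
        · intro q hq
          simp only [Finset.mem_product, mem_filter, mem_univ, true_and] at hq
          simp only [mem_filter, mem_univ, true_and]
          intro j hj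
          have hja : j ≠ a := fun h => hj (h ▸ mem_insert_self a s)
          rw [Function.update_of_ne hja]
          exact hq j (fun h => hj (mem_insert_of_mem h))
        · intro x' hx'
          simp [Function.update_idem]
        · intro q hq
          simp only [Finset.mem_product, mem_filter, mem_univ, true_and] at hq
          have hqa : q.2 a = x a := hq a ha
          have h1 : (Function.update q.2 a q.1) a = q.1 := by simp
          have h2 : Function.update (Function.update q.2 a q.1) a (x a) = q.2 := by
            rw [Function.update_idem, ← hqa, Function.update_eq_self]
          exact Prod.ext h1 h2
        · intro x' hx'
          simp [Function.update_idem]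
      rw [key, Finset.sum_product]
      have inner : ∀ y : S a,
          ∑ x'' ∈ Finset.univ.filter (fun x' : ∀ j, S j => ∀ j ∉ s, x' j = x j),
            ∏ i ∈ insert a s, g i ((Function.update x'' a y) i)
          = g a y * ∑ x'' ∈ Finset.univ.filter
              (fun x' : ∀ j, S j => ∀ j ∉ s, x' j = x j),
              ∏ i ∈ s, g i (x'' i) := by
        intro y
        rw [Finset.mul_sum]
        refine Finset.sum_congr rfl fun x'' _ => ?_
        rw [Finset.prod_insert ha]
        congr 1
        · simp
        · refine Finset.prod_congr rfl fun i hi => ?_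
          rw [Function.update_of_ne (ne_of_mem_of_not_mem hi ha)]
      simp_rw [inner, ih, ← Finset.sum_mul, Finset.prod_insert ha]

open scoped Classical in
/-- For a random vector `X` with a strictly positive Gibbs law
`p(x) = Z⁻¹ ∏_{C ∈ 𝒞(G)} φ_C(x_C)` with respect to a graph `G`, and any independent
set `s` of `G`, the coordinates `(X_i)_{i ∈ s}` are mutually conditionally independent
given `(X_j)_{j ∉ s}`: for every configuration `x` with positive marginal,
`p(X_s = x_s | X_{V∖s} = x_{V∖s}) = ∏_{i ∈ s} p(X_i = x_i | X_{V∖{i}} = x_{V∖{i}})`,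
where each conditional probability is, by definition, the corresponding ratio
of the joint pmf to a sum of the joint pmf. -/
theorem gibbs_indepSet_conditional_indep
    {V : Type*} [Fintype V] [DecidableEq V]
    (G : SimpleGraph V)
    (S : V → Type*) [∀ i, Fintype (S i)] [∀ i, DecidableEq (S i)]
    -- clique potentials
    (φ : Finset V → (∀ j, S j) → ℝ)
    (hφpos : ∀ C x, 0 < φ C x)
    -- each φ_C depends only on the coordinates x_C
    (hφloc : ∀ C (x x' : ∀ j, S j), (∀ j ∈ C, x j = x' j) → φ C x = φ C x')
    -- the set of cliques of G (vertex subsets with pairwise adjacent elements)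
    (cliques : Finset (Finset V))
    (hcliques : ∀ C : Finset V, C ∈ cliques ↔ G.IsClique (C : Set V))
    -- the normalizing constant and the Gibbs probability mass function
    (Z : ℝ) (hZ : Z = ∑ x : ∀ j, S j, ∏ C ∈ cliques, φ C x)
    (p : (∀ j, S j) → ℝ)
    (hp : ∀ x, p x = Z⁻¹ * ∏ C ∈ cliques, φ C x)
    -- an independent (stable) set of G
    (s : Finset V) (hs : ∀ i ∈ s, ∀ j ∈ s, ¬ G.Adj i j) :
    ∀ x : ∀ j, S j,
      0 < ∑ x' ∈ Finset.univ.filter (fun x' : ∀ j, S j => ∀ j ∉ s, x' j = x j), p x' →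
      p x / (∑ x' ∈ Finset.univ.filter (fun x' : ∀ j, S j => ∀ j ∉ s, x' j = x j), p x')
        = ∏ i ∈ s, (p x / ∑ xi' : S i, p (Function.update x i xi')) := by
  classical
  intro x _hx
  set F : (∀ j, S j) → ℝ := fun y => ∏ C ∈ cliques, φ C y with hF
  have hFpos : ∀ y, 0 < F y := fun y => Finset.prod_pos fun C _ => hφpos C y
  -- each clique meets s in at most one vertex
  have hone : ∀ C ∈ cliques, ∀ i ∈ s, ∀ j ∈ s, i ∈ C → j ∈ C → i = j := by
    intro C hC i hi j hj hiC hjC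
    by_contra hne
    exact hs i hi j hj (((hcliques C).mp hC) (by exact_mod_cast hiC)
      (by exact_mod_cast hjC) hne)
  -- pointwise factorization over the independent set
  have hfact : ∀ x' : ∀ j, S j, (∀ j ∉ s, x' j = x j) →
      F x' * F x ^ s.card = F x * ∏ i ∈ s, F (Function.update x i (x' i)) := by
    intro x' hx'
    have hswap : ∏ i ∈ s, F (Function.update x i (x' i))
        = ∏ C ∈ cliques, ∏ i ∈ s, φ C (Function.update x i (x' i)) := by
      rw [hF]; exact Finset.prod_comm
    rw [hF]
    simp only []
    rw [hswap, ← Finset.prod_pow, ← Finset.prod_mul_distrib, ← Finset.prod_mul_distrib]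
    refine Finset.prod_congr rfl fun C hC => ?_
    by_cases hex : ∃ i ∈ s, i ∈ C
    · obtain ⟨i₀, hi₀s, hi₀C⟩ := hex
      have h1 : φ C x' = φ C (Function.update x i₀ (x' i₀)) := by
        refine hφloc C x' _ fun j hj => ?_
        by_cases hji : j = i₀
        · subst hji; simp
        · rw [Function.update_of_ne hji]
          exact hx' j fun hjs => hji (hone C hC j hjs i₀ hi₀s hj hi₀C)
      have h2 : ∀ i ∈ s.erase i₀, φ C (Function.update x i (x' i)) = φ C x := by
        intro i hi
        have hii₀ : i ≠ i₀ := Finset.ne_of_mem_erase hi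
        have hiC : i ∉ C := fun hiC =>
          hii₀ (hone C hC i (Finset.mem_of_mem_erase hi) i₀ hi₀s hiC hi₀C)
        exact hφloc C (Function.update x i (x' i)) x fun j hj =>
          Function.update_of_ne (ne_of_mem_of_not_mem hj hiC) _ _
      rw [← Finset.mul_prod_erase s _ hi₀s, Finset.prod_congr rfl h2,
        Finset.prod_const, h1]
      have hcard2 : (s.erase i₀).card = s.card - 1 := Finset.card_erase_of_mem hi₀s
      obtain ⟨n, hn⟩ : ∃ n, s.card = n + 1 :=
        ⟨s.card - 1, (Nat.succ_pred_eq_of_pos (Finset.card_pos.mpr ⟨i₀, hi₀s⟩)).symm⟩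
      rw [hcard2, hn, Nat.add_sub_cancel, pow_succ]
      ring
    · push_neg at hex
      have h1 : φ C x' = φ C x := by
        refine hφloc C x' x fun j hj => hx' j fun hjs => hex j hjs hj
      have h2 : ∀ i ∈ s, φ C (Function.update x i (x' i)) = φ C x := by
        intro i hi
        exact hφloc C _ x fun j hj =>
          Function.update_of_ne (ne_of_mem_of_not_mem hj (hex i hi)) _ _
      rw [h1, Finset.prod_congr rfl h2, Finset.prod_const]
  -- summed factorization
  have hsum : (∑ x' ∈ Finset.univ.filter
        (fun x' : ∀ j, S j => ∀ j ∉ s, x' j = x j), F x') * F x ^ s.card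
      = F x * ∏ i ∈ s, ∑ y : S i, F (Function.update x i y) := by
    rw [Finset.sum_mul]
    have : ∀ x' ∈ Finset.univ.filter (fun x' : ∀ j, S j => ∀ j ∉ s, x' j = x j),
        F x' * F x ^ s.card = F x * ∏ i ∈ s, F (Function.update x i (x' i)) := by
      intro x' hx'
      exact hfact x' (by simpa using (Finset.mem_filter.mp hx').2)
    rw [Finset.sum_congr rfl this, ← Finset.mul_sum,
      aux_sum_filter_eq_prod_sum S x s (fun i y => F (Function.update x i y))]
  -- positivity facts
  have hZpos : 0 < Z := by
    rw [hZ]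
    exact Finset.sum_pos (fun y _ => hFpos y) ⟨x, Finset.mem_univ x⟩
  have hZinv : 0 < Z⁻¹ := inv_pos.mpr hZpos
  have hAne : x ∈ Finset.univ.filter (fun x' : ∀ j, S j => ∀ j ∉ s, x' j = x j) := by
    simp
  have hSA : 0 < ∑ x' ∈ Finset.univ.filter
      (fun x' : ∀ j, S j => ∀ j ∉ s, x' j = x j), F x' :=
    Finset.sum_pos (fun y _ => hFpos y) ⟨x, hAne⟩
  have hSi : ∀ i : V, 0 < ∑ y : S i, F (Function.update x i y) := by
    intro i
    exact Finset.sum_pos (fun y _ => hFpos _) ⟨x i, Finset.mem_univ _⟩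
  -- rewrite p in terms of F
  have hpF : ∀ y, p y = Z⁻¹ * F y := hp
  have hLHS : p x / (∑ x' ∈ Finset.univ.filter
        (fun x' : ∀ j, S j => ∀ j ∉ s, x' j = x j), p x')
      = F x / (∑ x' ∈ Finset.univ.filter
        (fun x' : ∀ j, S j => ∀ j ∉ s, x' j = x j), F x') := by
    simp_rw [hpF, ← Finset.mul_sum]
    rw [mul_div_mul_left _ _ (ne_of_gt hZinv)]
  have hRHS : ∀ i ∈ s, p x / (∑ xi' : S i, p (Function.update x i xi'))
      = F x / (∑ y : S i, F (Function.update x i y)) := by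
    intro i _
    simp_rw [hpF, ← Finset.mul_sum]
    rw [mul_div_mul_left _ _ (ne_of_gt hZinv)]
  rw [hLHS, Finset.prod_congr rfl hRHS]
  -- final computation
  rw [Finset.prod_div_distrib, Finset.prod_const]
  rw [div_eq_div_iff (ne_of_gt hSA) (ne_of_gt (Finset.prod_pos fun i _ => hSi i))]
  rw [mul_comm (F x)] at hsum
  linarith [hsum]
end
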